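/- Let α > 0 with α ≤ 1 and δ0 > 0. Let h and c be even functions on ℝ^d∖{0}, homogeneous of degree 0 and Lipschitz of order α on the sphere, with h positive (so inf_{S^{d−1}} h > 0). Let f be a measurable function on ℝ^d such that for every δ ∈ (0, δ0), (f(ξ) − c(ξ)|ξ|^{−h(ξ)}) · |ξ|^{h(ξ)+δ} → 0 as |ξ| → ∞. Let ρ be a Schwartz function on ℝ^{d−1} with ∫_{ℝ^{d−1}} ρ(γ) dγ = 1. Then the windowed Radon transform R_ρf(p) = ∫_{ℝ^{d−1}} f(γ, p) ρ(γ) dγ converges absolutely for |p| large, and for every δ ∈ (0, min(δ0, α)), (R_ρf(p) − c(θ0)|p|^{−h(θ0)}) · |p|^{h(θ0)+δ} → 0 as |p| → ∞. -/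

import Mathlib

open MeasureTheory Filter

noncomputable section

/-- The point `(γ, p) ∈ ℝ^{m+1}` with `γ ∈ ℝ^m` and last coordinate `p`. -/
def app {m : ℕ} (γ : EuclideanSpace ℝ (Fin m)) (p : ℝ) :
    EuclideanSpace ℝ (Fin (m + 1)) :=
  WithLp.toLp 2 (Fin.snoc (α := fun _ => ℝ) (WithLp.ofLp γ) p)

/-- The direction `θ₀ = (0, …, 0, 1) ∈ ℝ^{m+1}`. -/
def theta0 (m : ℕ) : EuclideanSpace ℝ (Fin (m + 1)) := app 0 1

/-- `g` is homogeneous of degree `0` on `ℝ^n ∖ {0}`. -/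
def Homog0 {n : ℕ} (g : EuclideanSpace ℝ (Fin n) → ℝ) : Prop :=
  ∀ t : ℝ, 0 < t → ∀ ξ : EuclideanSpace ℝ (Fin n), ξ ≠ 0 → g (t • ξ) = g ξ

/-- `g` is even. -/
def EvenFn {n : ℕ} (g : EuclideanSpace ℝ (Fin n) → ℝ) : Prop :=
  ∀ ξ : EuclideanSpace ℝ (Fin n), g (-ξ) = g ξ

/-- `g` is Lipschitz of order `α` on the unit sphere. -/
def LipSphere {n : ℕ} (g : EuclideanSpace ℝ (Fin n) → ℝ) (α : ℝ) : Prop :=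
  ∃ L > (0 : ℝ), ∀ x y : EuclideanSpace ℝ (Fin n), ‖x‖ = 1 → ‖y‖ = 1 →
    |g x - g y| ≤ L * ‖x - y‖ ^ α

/-- `ρ` is rapidly decreasing. -/
def RapidDecay {n : ℕ} (ρ : EuclideanSpace ℝ (Fin n) → ℝ) : Prop :=
  ∀ k : ℕ, ∃ C > (0 : ℝ), ∀ x : EuclideanSpace ℝ (Fin n),
    |ρ x| ≤ C * (1 + ‖x‖) ^ (-(k : ℝ))

/-!
Write `ξ = (γ, p)` and `q = |p|`, and fix `0 < s < 1` with `δ < α (1 - s)`. On the region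
`‖γ‖ ≤ q ^ s` the direction of `ξ` is within `2 q ^ (s - 1)` of `± θ₀`, so by evenness,
homogeneity and Hölder continuity `h ξ` and `c ξ` differ from `h θ₀` and `c θ₀` by
`O(q ^ (-α (1 - s)))`, while `log ‖ξ‖ - log q ≤ q ^ (s - 1)`. Hence
`‖ξ‖ ^ (-h ξ) = q ^ (-h θ₀) · exp (O(q ^ (-α (1 - s)) log q))`, and the rescaled error
`(f ξ - c θ₀ q ^ (-h θ₀)) q ^ (h θ₀ + δ)` tends to `0` uniformly on the region. Off the region
`f` is bounded, so the rescaled error is `O(q ^ (h θ₀ + δ))`, hence `O(‖γ‖ ^ k)` once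
`k s ≥ h θ₀ + δ`; the Schwartz window absorbs this, and dominated convergence finishes the proof.
-/

open Real Topology

lemma div_le_rpow_sub_one {q r s : ℝ} (hq : 0 < q) (hr : r ≤ q ^ s) : r / q ≤ q ^ (s - 1) := by
  rw [Real.rpow_sub_one hq.ne']
  exact div_le_div_of_nonneg_right hr hq.le

lemma rpow_le_pow_of_rpow_le {q r s N : ℝ} {k : ℕ} (hq : 1 ≤ q) (hk : N ≤ k * s)
    (hr : q ^ s ≤ r) : q ^ N ≤ r ^ k :=
  calc q ^ N ≤ q ^ ((k : ℝ) * s) := Real.rpow_le_rpow_of_exponent_le hq hk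
    _ = (q ^ s) ^ k := by rw [mul_comm, Real.rpow_mul (by linarith), Real.rpow_natCast]
    _ ≤ r ^ k := pow_le_pow_left₀ (Real.rpow_nonneg (by linarith) _) hr k

lemma rpow_neg_mul_rpow_eq_exp {a q : ℝ} (ha : 0 < a) (hq : 0 < q) (e H : ℝ) :
    a ^ (-e) * q ^ H = exp (H * log q - e * log a) := by
  rw [Real.rpow_def_of_pos ha, Real.rpow_def_of_pos hq, ← Real.exp_add]
  ring_nf

-- With `a = ‖ξ‖` and `q = |p|`, the three terms are the error allowed by the hypothesis on `f`,
-- the variation of `c`, and the variation of `‖ξ‖ ^ (-h ξ)`.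
lemma sub_mul_rpow_eq_of_pos {a q : ℝ} (ha : 0 < a) (hq : 0 < q) (F C C₀ e H δ : ℝ) :
    (F - C₀ * q ^ (-H)) * q ^ (H + δ) =
      (F - C * a ^ (-e)) * a ^ (e + δ) * (q / a) ^ δ * (a ^ (-e) * q ^ H)
        + (C - C₀) * q ^ δ * (a ^ (-e) * q ^ H) + C₀ * ((a ^ (-e) * q ^ H - 1) * q ^ δ) := by
  rw [Real.rpow_add ha, Real.rpow_add hq, Real.div_rpow hq.le ha.le, Real.rpow_neg ha.le,
    Real.rpow_neg hq.le]
  have : a ^ e ≠ 0 := (Real.rpow_pos_of_pos ha e).ne'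
  have : a ^ δ ≠ 0 := (Real.rpow_pos_of_pos ha δ).ne'
  have : q ^ H ≠ 0 := (Real.rpow_pos_of_pos hq H).ne'
  field_simp
  ring

lemma abs_sub_mul_rpow_neg_mul_rpow_le {F C M q H w : ℝ} (hF : |F| ≤ M) (hq : 1 ≤ q)
    (hH : 0 ≤ H) : |(F - C * q ^ (-H)) * q ^ w| ≤ (M + |C|) * q ^ w := by
  have hq0 : 0 ≤ q := zero_le_one.trans hq
  rw [abs_mul, abs_of_nonneg (Real.rpow_nonneg hq0 _)]
  gcongr
  refine (abs_sub _ _).trans ?_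
  rw [abs_mul, abs_of_nonneg (Real.rpow_nonneg hq0 _)]
  gcongr
  exact mul_le_of_le_one_right (abs_nonneg _)
    (Real.rpow_le_one_of_one_le_of_nonpos hq (neg_nonpos.mpr hH))

lemma exists_pos_le_one_lt_mul_one_sub {α δ : ℝ} (hδ : 0 ≤ δ) (hδα : δ < α) :
    ∃ s : ℝ, 0 < s ∧ s ≤ 1 ∧ δ < α * (1 - s) := by
  have hα : 0 < α := hδ.trans_lt hδα
  refine ⟨(1 - δ / α) / 2, ?_, ?_, ?_⟩
  · linarith [(div_lt_one hα).mpr hδα]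
  · linarith [div_nonneg hδ hα.le]
  · have : α * (1 - (1 - δ / α) / 2) = (α + δ) / 2 := by field_simp; ring
    rw [this]; linarith

lemma tendsto_rpow_neg_mul_log_add_one {a : ℝ} (ha : 0 < a) :
    Tendsto (fun q : ℝ => q ^ (-a) * (log q + 1)) atTop (𝓝 0) := by
  have hlog := (isLittleO_log_rpow_atTop ha).tendsto_div_nhds_zero
  have hpow := tendsto_rpow_neg_atTop ha
  have hsum : Tendsto (fun q : ℝ => log q / q ^ a + q ^ (-a)) atTop (𝓝 0) := by
    simpa using hlog.add hpow
  refine hsum.congr' ?_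
  filter_upwards [eventually_gt_atTop 0] with q hq
  rw [Real.rpow_neg hq.le]
  ring

lemma tendsto_exp_sub_one_mul {ι : Type*} {l : Filter ι} {u w : ι → ℝ}
    (hu : Tendsto u l (𝓝 0)) (huw : Tendsto (fun i => u i * w i) l (𝓝 0)) :
    Tendsto (fun i => (exp (u i) - 1) * w i) l (𝓝 0) := by
  refine squeeze_zero_norm' ?_ (by simpa using huw.norm.const_mul 2)
  filter_upwards [hu.eventually (Metric.closedBall_mem_nhds 0 one_pos)] with i hi
  rw [dist_zero_right, Real.norm_eq_abs] at hi
  rw [norm_mul, ← mul_assoc, Real.norm_eq_abs, Real.norm_eq_abs]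
  gcongr
  exact Real.abs_exp_sub_one_le hi

lemma norm_inv_norm_smul_sub_inv_norm_smul_le {E : Type*} [NormedAddCommGroup E]
    [NormedSpace ℝ E] (x : E) {y : E} (hy : y ≠ 0) :
    ‖‖x‖⁻¹ • x - ‖y‖⁻¹ • y‖ ≤ 2 * ‖x - y‖ / ‖y‖ := by
  have hy' : 0 < ‖y‖ := norm_pos_iff.mpr hy
  have hsplit : ‖x‖⁻¹ • x - ‖y‖⁻¹ • y = (‖x‖⁻¹ - ‖y‖⁻¹) • x + ‖y‖⁻¹ • (x - y) := by
    rw [sub_smul, smul_sub]; abel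
  have hscale : |‖x‖⁻¹ - ‖y‖⁻¹| * ‖x‖ ≤ ‖x - y‖ / ‖y‖ := by
    rcases eq_or_ne x 0 with rfl | hx
    · simp only [norm_zero, mul_zero]; positivity
    have hx' : 0 < ‖x‖ := norm_pos_iff.mpr hx
    have h := congrArg abs (show (‖x‖⁻¹ - ‖y‖⁻¹) * ‖x‖ = (‖y‖ - ‖x‖) / ‖y‖ by field_simp)
    rw [abs_mul, abs_of_pos hx', abs_div, abs_of_pos hy'] at h
    rw [h]
    gcongr
    exact (abs_norm_sub_norm_le y x).trans_eq (norm_sub_rev y x)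
  calc ‖‖x‖⁻¹ • x - ‖y‖⁻¹ • y‖
      ≤ |‖x‖⁻¹ - ‖y‖⁻¹| * ‖x‖ + ‖y‖⁻¹ * ‖x - y‖ := by
        rw [hsplit]
        refine (norm_add_le _ _).trans_eq ?_
        rw [norm_smul, norm_smul, Real.norm_eq_abs, norm_inv, norm_norm]
    _ ≤ ‖x - y‖ / ‖y‖ + ‖x - y‖ / ‖y‖ := by rw [inv_mul_eq_div]; gcongr
    _ = 2 * ‖x - y‖ / ‖y‖ := by ring

section App

variable {m : ℕ}

lemma norm_app (γ : EuclideanSpace ℝ (Fin m)) (p : ℝ) :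
    ‖app γ p‖ = √(‖γ‖ ^ 2 + p ^ 2) := by
  rw [EuclideanSpace.norm_eq, Fin.sum_univ_castSucc, EuclideanSpace.norm_eq,
    Real.sq_sqrt (by positivity)]
  simp [app]

lemma abs_le_norm_app (γ : EuclideanSpace ℝ (Fin m)) (p : ℝ) : |p| ≤ ‖app γ p‖ := by
  rw [norm_app, ← Real.sqrt_sq_eq_abs]
  exact Real.sqrt_le_sqrt (le_add_of_nonneg_left (by positivity))

lemma app_add (γ γ' : EuclideanSpace ℝ (Fin m)) (p p' : ℝ) :
    app γ p + app γ' p' = app (γ + γ') (p + p') := by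
  ext i
  induction i using Fin.lastCases <;> simp [app]

lemma norm_app_zero_right (γ : EuclideanSpace ℝ (Fin m)) : ‖app γ 0‖ = ‖γ‖ := by
  simp [norm_app]

lemma app_zero_left (p : ℝ) : app (0 : EuclideanSpace ℝ (Fin m)) p = p • theta0 m := by
  ext i
  induction i using Fin.lastCases <;> simp [app, theta0]

lemma norm_theta0 (m : ℕ) : ‖theta0 m‖ = 1 := by
  simp [theta0, norm_app]

lemma theta0_ne_zero (m : ℕ) : theta0 m ≠ 0 :=
  norm_ne_zero_iff.mp (by rw [norm_theta0]; exact one_ne_zero)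

lemma norm_app_le (γ : EuclideanSpace ℝ (Fin m)) (p : ℝ) : ‖app γ p‖ ≤ ‖γ‖ + |p| := by
  have h := norm_add_le (app γ 0) (app 0 p)
  rwa [app_add, add_zero, zero_add, norm_app_zero_right, app_zero_left, norm_smul,
    norm_theta0, mul_one, Real.norm_eq_abs] at h

lemma continuous_app (p : ℝ) : Continuous fun γ : EuclideanSpace ℝ (Fin m) => app γ p := by
  unfold app
  fun_prop

lemma log_norm_app_sub_log_abs_mem_Icc (γ : EuclideanSpace ℝ (Fin m)) {p : ℝ} (hp : p ≠ 0) :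
    log ‖app γ p‖ - log |p| ∈ Set.Icc 0 (‖γ‖ / |p|) := by
  have hq : 0 < |p| := abs_pos.mpr hp
  have hle := abs_le_norm_app γ p
  rw [← Real.log_div (hq.trans_le hle).ne' hq.ne']
  refine ⟨Real.log_nonneg ((one_le_div hq).mpr hle), ?_⟩
  refine (Real.log_le_sub_one_of_pos (div_pos (hq.trans_le hle) hq)).trans ?_
  rw [div_sub_one hq.ne']
  gcongr
  linarith [norm_app_le γ p]

end App

section Homogeneous

variable {n : ℕ} {g : EuclideanSpace ℝ (Fin n) → ℝ}

lemma Homog0.apply_inv_norm_smul (hg : Homog0 g) {ξ : EuclideanSpace ℝ (Fin n)} (hξ : ξ ≠ 0) :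
    g (‖ξ‖⁻¹ • ξ) = g ξ :=
  hg _ (inv_pos.mpr (norm_pos_iff.mpr hξ)) ξ hξ

lemma Homog0.apply_smul_of_even (hg : Homog0 g) (heven : EvenFn g) {t : ℝ} (ht : t ≠ 0)
    {ξ : EuclideanSpace ℝ (Fin n)} (hξ : ξ ≠ 0) : g (t • ξ) = g ξ := by
  rcases ht.lt_or_gt with ht | ht
  · rw [← neg_neg t, neg_smul, ← smul_neg, hg _ (neg_pos.mpr ht) _ (neg_ne_zero.mpr hξ), heven]
  · exact hg t ht ξ hξ

variable {α L : ℝ}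
  (hlip : ∀ x y : EuclideanSpace ℝ (Fin n), ‖x‖ = 1 → ‖y‖ = 1 → |g x - g y| ≤ L * ‖x - y‖ ^ α)
include hlip

lemma Homog0.abs_sub_le (hg : Homog0 g) (hL : 0 ≤ L) (hα : 0 ≤ α)
    {ξ η : EuclideanSpace ℝ (Fin n)} (hξ : ξ ≠ 0) (hη : η ≠ 0) :
    |g ξ - g η| ≤ L * (2 * ‖ξ - η‖ / ‖η‖) ^ α := by
  rw [← hg.apply_inv_norm_smul hξ, ← hg.apply_inv_norm_smul hη]
  refine (hlip _ _ (norm_smul_inv_norm hξ) (norm_smul_inv_norm hη)).trans ?_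
  gcongr
  exact norm_inv_norm_smul_sub_inv_norm_smul_le ξ hη

lemma Homog0.abs_le (hg : Homog0 g) (hL : 0 ≤ L) (hα : 0 ≤ α)
    {ξ η : EuclideanSpace ℝ (Fin n)} (hξ : ξ ≠ 0) (hη : ‖η‖ = 1) :
    |g ξ| ≤ |g η| + L * 2 ^ α := by
  have hu : ‖‖ξ‖⁻¹ • ξ‖ = 1 := norm_smul_inv_norm hξ
  have hdist : ‖‖ξ‖⁻¹ • ξ - η‖ ≤ 2 := by
    refine (norm_sub_le _ _).trans ?_
    rw [hu, hη]; norm_num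
  have h := hlip _ _ hu hη
  rw [hg.apply_inv_norm_smul hξ] at h
  have h2 : L * ‖‖ξ‖⁻¹ • ξ - η‖ ^ α ≤ L * 2 ^ α := by gcongr
  linarith [abs_sub_abs_le_abs_sub (g ξ) (g η)]

end Homogeneous

lemma Homog0.abs_apply_app_sub_apply_theta0_le {m : ℕ} {g : EuclideanSpace ℝ (Fin (m + 1)) → ℝ}
    {α L : ℝ} (hg : Homog0 g) (heven : EvenFn g) (hL : 0 ≤ L) (hα : 0 ≤ α)
    (hlip : ∀ x y : EuclideanSpace ℝ (Fin (m + 1)), ‖x‖ = 1 → ‖y‖ = 1 →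
      |g x - g y| ≤ L * ‖x - y‖ ^ α)
    (γ : EuclideanSpace ℝ (Fin m)) {p : ℝ} (hp : p ≠ 0) :
    |g (app γ p) - g (theta0 m)| ≤ L * (2 * ‖γ‖ / |p|) ^ α := by
  have hnorm : ‖app (0 : EuclideanSpace ℝ (Fin m)) p‖ = |p| := by
    rw [app_zero_left, norm_smul, norm_theta0, mul_one, Real.norm_eq_abs]
  have hne : ∀ γ' : EuclideanSpace ℝ (Fin m), app γ' p ≠ 0 := fun γ' =>
    norm_ne_zero_iff.mp ((abs_pos.mpr hp).trans_le (abs_le_norm_app γ' p)).ne'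
  have hsub : app γ p - app 0 p = app γ 0 := by
    rw [sub_eq_iff_eq_add, app_add, add_zero, zero_add]
  rw [← hg.apply_smul_of_even heven hp (theta0_ne_zero m), ← app_zero_left]
  have h := hg.abs_sub_le hlip hL hα (hne γ) (hne 0)
  rwa [hsub, norm_app_zero_right, hnorm] at h

section NearAxis

variable (E : Type*) [NormedAddCommGroup E]

def nearAxis (s : ℝ) : Filter (E × ℝ) :=
  comap Prod.snd (cocompact ℝ) ⊓ 𝓟 {x | ‖x.1‖ ≤ |x.2| ^ s}

variable {E} {s : ℝ}

lemma eventually_nearAxis_iff {P : E × ℝ → Prop} :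
    (∀ᶠ x in nearAxis E s, P x) ↔ ∀ᶠ p in cocompact ℝ, ∀ γ : E, ‖γ‖ ≤ |p| ^ s → P (γ, p) := by
  simp only [nearAxis, eventually_inf_principal, eventually_comap,
    Set.mem_ofPred_eq, Prod.forall]
  refine eventually_congr (Eventually.of_forall fun p => ⟨fun h γ => h γ p rfl, ?_⟩)
  rintro h γ _ rfl
  exact h γ

lemma eventually_norm_fst_le_nearAxis : ∀ᶠ x in nearAxis E s, ‖x.1‖ ≤ |x.2| ^ s :=
  eventually_nearAxis_iff.mpr (Eventually.of_forall fun _ _ => id)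

lemma tendsto_abs_snd_nearAxis : Tendsto (fun x : E × ℝ => |x.2|) (nearAxis E s) atTop :=
  (tendsto_norm_cocompact_atTop.comp tendsto_comap).mono_left inf_le_left

lemma tendsto_prodMk_nearAxis (hs : 0 < s) (γ : E) :
    Tendsto (fun p : ℝ => (γ, p)) (cocompact ℝ) (nearAxis E s) := by
  refine tendsto_inf.mpr ⟨tendsto_comap_iff.mpr tendsto_id, tendsto_principal.mpr ?_⟩
  exact ((tendsto_rpow_atTop hs).comp tendsto_norm_cocompact_atTop).eventually_ge_atTop ‖γ‖

end NearAxis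

theorem tendsto_integral_mul_schwartzMap_of_nearAxis {E : Type*} [NormedAddCommGroup E]
    [NormedSpace ℝ E] [MeasurableSpace E] [BorelSpace E] [SecondCountableTopology E]
    (μ : Measure E) [μ.HasTemperateGrowth] {s M N : ℝ} (hs : 0 < s) {T : E × ℝ → ℝ}
    (hT : Tendsto T (nearAxis E s) (𝓝 0))
    (hmeas : ∀ p, AEStronglyMeasurable (fun γ => T (γ, p)) μ)
    (hbound : ∀ᶠ p in cocompact ℝ, ∀ γ, |T (γ, p)| ≤ M * |p| ^ N) (ρ : SchwartzMap E ℝ) :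
    Tendsto (fun p => ∫ γ, T (γ, p) * ρ γ ∂μ) (cocompact ℝ) (𝓝 0) := by
  obtain ⟨k, hk⟩ : ∃ k : ℕ, N ≤ k * s := ⟨⌈N / s⌉₊, (div_le_iff₀ hs).mp (Nat.le_ceil _)⟩
  have : (cocompact ℝ).IsCountablyGenerated := by
    rw [cocompact_eq_atBot_atTop]; infer_instance
  have hnear : ∀ᶠ p in cocompact ℝ, ∀ γ : E, ‖γ‖ ≤ |p| ^ s → |T (γ, p)| ≤ 1 :=
    eventually_nearAxis_iff.mp
      ((tendsto_zero_iff_norm_tendsto_zero.mp hT).eventually (ge_mem_nhds one_pos))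
  -- Near the axis `T` is uniformly small; off it, `|p| ^ N ≤ ‖γ‖ ^ k`.
  have hdom : ∀ᶠ p in cocompact ℝ, ∀ᵐ γ ∂μ,
      ‖T (γ, p) * ρ γ‖ ≤ |ρ γ| + |M| * (‖γ‖ ^ k * ‖ρ γ‖) := by
    filter_upwards [hnear, hbound, tendsto_norm_cocompact_atTop.eventually_ge_atTop 1]
      with p hnear hbound hp
    refine Eventually.of_forall fun γ => ?_
    rw [norm_mul, Real.norm_eq_abs, Real.norm_eq_abs]
    rcases le_or_gt ‖γ‖ (|p| ^ s) with hγ | hγ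
    · have : 0 ≤ |M| * (‖γ‖ ^ k * |ρ γ|) := by positivity
      nlinarith [hnear γ hγ, abs_nonneg (ρ γ)]
    · have hTk : |T (γ, p)| ≤ |M| * ‖γ‖ ^ k :=
        (hbound γ).trans (mul_le_mul (le_abs_self M) (rpow_le_pow_of_rpow_le hp hk hγ.le)
          (by positivity) (abs_nonneg M))
      have : |T (γ, p)| * |ρ γ| ≤ |M| * ‖γ‖ ^ k * |ρ γ| := by gcongr
      nlinarith [abs_nonneg (ρ γ)]
  simpa only [Pi.zero_apply, integral_zero] using tendsto_integral_filter_of_dominated_convergence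
    (F := fun p γ => T (γ, p) * ρ γ) (f := 0) _
    (Eventually.of_forall fun p => (hmeas p).mul ρ.continuous.aestronglyMeasurable) hdom
    ((ρ.integrable.abs).add ((ρ.integrable_pow_mul μ k).const_mul |M|))
    (Eventually.of_forall fun γ => by
      simpa only [zero_mul, Pi.zero_apply, Function.comp_def] using
        (hT.comp (tendsto_prodMk_nearAxis hs γ)).mul_const (ρ γ))

section Asymptotics

variable {m : ℕ} {s : ℝ}

lemma tendsto_app_nearAxis :
    Tendsto (fun x : EuclideanSpace ℝ (Fin m) × ℝ => app x.1 x.2) (nearAxis _ s)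
      (cocompact _) := by
  rw [← Metric.cobounded_eq_cocompact, ← tendsto_norm_atTop_iff_cobounded]
  exact tendsto_atTop_mono (fun x => abs_le_norm_app x.1 x.2) tendsto_abs_snd_nearAxis

lemma Homog0.abs_apply_app_sub_apply_theta0_le_rpow {g : EuclideanSpace ℝ (Fin (m + 1)) → ℝ}
    {α L : ℝ} (hg : Homog0 g) (heven : EvenFn g) (hL : 0 ≤ L) (hα : 0 ≤ α)
    (hlip : ∀ x y : EuclideanSpace ℝ (Fin (m + 1)), ‖x‖ = 1 → ‖y‖ = 1 →
      |g x - g y| ≤ L * ‖x - y‖ ^ α)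
    {γ : EuclideanSpace ℝ (Fin m)} {p : ℝ} (hp : p ≠ 0) (hγ : ‖γ‖ ≤ |p| ^ s) :
    |g (app γ p) - g (theta0 m)| ≤ L * 2 ^ α * |p| ^ (-(α * (1 - s))) := by
  have hq : 0 < |p| := abs_pos.mpr hp
  calc |g (app γ p) - g (theta0 m)| ≤ L * (2 * ‖γ‖ / |p|) ^ α :=
        hg.abs_apply_app_sub_apply_theta0_le heven hL hα hlip γ hp
    _ ≤ L * (2 * |p| ^ (s - 1)) ^ α := by
        rw [mul_div_assoc]
        gcongr
        exact div_le_rpow_sub_one hq hγ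
    _ = L * 2 ^ α * |p| ^ (-(α * (1 - s))) := by
        rw [Real.mul_rpow zero_le_two (by positivity), ← Real.rpow_mul hq.le, mul_assoc]
        ring_nf

lemma Homog0.tendsto_sub_apply_theta0_mul_rpow_nearAxis
    {g : EuclideanSpace ℝ (Fin (m + 1)) → ℝ}
    {α L δ : ℝ} (hg : Homog0 g) (heven : EvenFn g) (hL : 0 ≤ L) (hα : 0 ≤ α)
    (hlip : ∀ x y : EuclideanSpace ℝ (Fin (m + 1)), ‖x‖ = 1 → ‖y‖ = 1 →
      |g x - g y| ≤ L * ‖x - y‖ ^ α)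
    (hδ : δ < α * (1 - s)) :
    Tendsto (fun x : EuclideanSpace ℝ (Fin m) × ℝ =>
      (g (app x.1 x.2) - g (theta0 m)) * |x.2| ^ δ) (nearAxis _ s) (𝓝 0) := by
  have hlim : Tendsto (fun x : EuclideanSpace ℝ (Fin m) × ℝ =>
      L * 2 ^ α * |x.2| ^ (-(α * (1 - s) - δ))) (nearAxis _ s) (𝓝 0) := by
    simpa using ((tendsto_rpow_neg_atTop (sub_pos.mpr hδ)).comp
      tendsto_abs_snd_nearAxis).const_mul (L * 2 ^ α)
  refine squeeze_zero_norm' ?_ hlim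
  filter_upwards [tendsto_abs_snd_nearAxis.eventually_gt_atTop 0,
    eventually_norm_fst_le_nearAxis] with x hq hγ
  rw [Real.norm_eq_abs, abs_mul, abs_of_nonneg (Real.rpow_nonneg hq.le _), neg_sub,
    sub_eq_add_neg δ, Real.rpow_add hq, mul_comm (|x.2| ^ δ), ← mul_assoc]
  gcongr
  exact hg.abs_apply_app_sub_apply_theta0_le_rpow heven hL hα hlip
    (abs_pos.mp hq) hγ

section LogRatio

variable {h : EuclideanSpace ℝ (Fin (m + 1)) → ℝ} {α L : ℝ}
  (hh : Homog0 h) (heven : EvenFn h) (hL : 0 ≤ L) (hα : 0 ≤ α) (hα1 : α ≤ 1) (hs1 : s ≤ 1)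
  (hlip : ∀ x y : EuclideanSpace ℝ (Fin (m + 1)), ‖x‖ = 1 → ‖y‖ = 1 →
    |h x - h y| ≤ L * ‖x - y‖ ^ α)
include hh heven hL hα hα1 hs1 hlip

lemma abs_log_ratio_le {γ : EuclideanSpace ℝ (Fin m)} {p : ℝ} (hp : 1 ≤ |p|)
    (hγ : ‖γ‖ ≤ |p| ^ s) :
    |h (theta0 m) * log |p| - h (app γ p) * log ‖app γ p‖| ≤
      (L * 2 ^ α + |h (theta0 m)|) * (|p| ^ (-(α * (1 - s))) * (log |p| + 1)) := by
  set q := |p|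
  set w := q ^ (-(α * (1 - s)))
  have hp0 : p ≠ 0 := abs_pos.mp (one_pos.trans_le hp)
  have hq : 0 < q := one_pos.trans_le hp
  have hw : 0 ≤ w := Real.rpow_nonneg hq.le _
  have hlogq : 0 ≤ log q := Real.log_nonneg hp
  obtain ⟨hD0, hD⟩ : log ‖app γ p‖ - log q ∈ Set.Icc 0 (‖γ‖ / q) :=
    log_norm_app_sub_log_abs_mem_Icc γ hp0
  have hDw : log ‖app γ p‖ - log q ≤ w := by
    refine hD.trans ((div_le_rpow_sub_one hq hγ).trans ?_)
    exact Real.rpow_le_rpow_of_exponent_le hp (by nlinarith)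
  have hw1 : w ≤ 1 := Real.rpow_le_one_of_one_le_of_nonpos hp (by nlinarith)
  have hη : |h (app γ p) - h (theta0 m)| ≤ L * 2 ^ α * w :=
    hh.abs_apply_app_sub_apply_theta0_le_rpow heven hL hα hlip hp0 hγ
  calc |h (theta0 m) * log q - h (app γ p) * log ‖app γ p‖|
      = |(h (app γ p) - h (theta0 m)) * log ‖app γ p‖
          + h (theta0 m) * (log ‖app γ p‖ - log q)| := by
        rw [← abs_neg]; ring_nf
    _ ≤ |h (app γ p) - h (theta0 m)| * log ‖app γ p‖
          + |h (theta0 m)| * (log ‖app γ p‖ - log q) := by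
        refine (abs_add_le _ _).trans_eq ?_
        rw [abs_mul, abs_mul, abs_of_nonneg (show 0 ≤ log ‖app γ p‖ by linarith),
          abs_of_nonneg hD0]
    _ ≤ L * 2 ^ α * w * (log q + 1) + |h (theta0 m)| * w := by
        gcongr <;> linarith
    _ ≤ (L * 2 ^ α + |h (theta0 m)|) * (w * (log q + 1)) := by
        have : 0 ≤ |h (theta0 m)| * w * log q := by positivity
        nlinarith

lemma tendsto_log_ratio_mul_rpow_nearAxis {δ : ℝ} (hδ : δ < α * (1 - s)) :
    Tendsto (fun x : EuclideanSpace ℝ (Fin m) × ℝ =>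
      (h (theta0 m) * log |x.2| - h (app x.1 x.2) * log ‖app x.1 x.2‖) * |x.2| ^ δ)
      (nearAxis _ s) (𝓝 0) := by
  have hlim := ((tendsto_rpow_neg_mul_log_add_one (sub_pos.mpr hδ)).comp
    (tendsto_abs_snd_nearAxis (E := EuclideanSpace ℝ (Fin m)) (s := s))).const_mul
    (L * 2 ^ α + |h (theta0 m)|)
  rw [mul_zero] at hlim
  refine squeeze_zero_norm' ?_ hlim
  filter_upwards [tendsto_abs_snd_nearAxis.eventually_ge_atTop 1,
    eventually_norm_fst_le_nearAxis] with x hq hγ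
  have hq0 : 0 < |x.2| := one_pos.trans_le hq
  rw [Real.norm_eq_abs, abs_mul, abs_of_nonneg (Real.rpow_nonneg hq0.le _), Function.comp_apply,
    neg_sub, sub_eq_add_neg δ, Real.rpow_add hq0]
  calc _ ≤ (L * 2 ^ α + |h (theta0 m)|) * (|x.2| ^ (-(α * (1 - s))) * (log |x.2| + 1))
        * |x.2| ^ δ := by
        gcongr
        exact abs_log_ratio_le hh heven hL hα hα1 hs1 hlip hq hγ
    _ = _ := by ring

lemma tendsto_rpow_ratio_sub_one_mul_nearAxis {δ : ℝ} (hδ0 : 0 ≤ δ) (hδ : δ < α * (1 - s)) :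
    Tendsto (fun x : EuclideanSpace ℝ (Fin m) × ℝ =>
      (‖app x.1 x.2‖ ^ (-h (app x.1 x.2)) * |x.2| ^ h (theta0 m) - 1) * |x.2| ^ δ)
      (nearAxis _ s) (𝓝 0) := by
  have hu : Tendsto (fun x : EuclideanSpace ℝ (Fin m) × ℝ =>
      h (theta0 m) * log |x.2| - h (app x.1 x.2) * log ‖app x.1 x.2‖) (nearAxis _ s) (𝓝 0) := by
    simpa using tendsto_log_ratio_mul_rpow_nearAxis hh heven hL hα hα1 hs1 hlip
      (hδ0.trans_lt hδ)
  refine (tendsto_exp_sub_one_mul hu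
    (tendsto_log_ratio_mul_rpow_nearAxis hh heven hL hα hα1 hs1 hlip hδ)).congr' ?_
  filter_upwards [tendsto_abs_snd_nearAxis.eventually_gt_atTop 0] with x hq
  rw [rpow_neg_mul_rpow_eq_exp (hq.trans_le (abs_le_norm_app x.1 x.2)) hq]

end LogRatio

theorem tendsto_error_mul_rpow_nearAxis {f c h : EuclideanSpace ℝ (Fin (m + 1)) → ℝ}
    {α Lh Lc δ : ℝ} (hh : Homog0 h) (hheven : EvenFn h) (hc : Homog0 c) (hceven : EvenFn c)
    (hLh : 0 ≤ Lh) (hLc : 0 ≤ Lc) (hα : 0 ≤ α) (hα1 : α ≤ 1) (hs1 : s ≤ 1)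
    (hhlip : ∀ x y : EuclideanSpace ℝ (Fin (m + 1)), ‖x‖ = 1 → ‖y‖ = 1 →
      |h x - h y| ≤ Lh * ‖x - y‖ ^ α)
    (hclip : ∀ x y : EuclideanSpace ℝ (Fin (m + 1)), ‖x‖ = 1 → ‖y‖ = 1 →
      |c x - c y| ≤ Lc * ‖x - y‖ ^ α)
    (hδ0 : 0 ≤ δ) (hδ : δ < α * (1 - s))
    (hf : Tendsto (fun ξ : EuclideanSpace ℝ (Fin (m + 1)) =>
      (f ξ - c ξ * ‖ξ‖ ^ (-h ξ)) * ‖ξ‖ ^ (h ξ + δ)) (cocompact _) (𝓝 0)) :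
    Tendsto (fun x : EuclideanSpace ℝ (Fin m) × ℝ =>
      (f (app x.1 x.2) - c (theta0 m) * |x.2| ^ (-h (theta0 m))) * |x.2| ^ (h (theta0 m) + δ))
      (nearAxis _ s) (𝓝 0) := by
  have hpos : ∀ᶠ x : EuclideanSpace ℝ (Fin m) × ℝ in nearAxis _ s, 0 < |x.2| :=
    tendsto_abs_snd_nearAxis.eventually_gt_atTop 0
  have hA : Tendsto (fun x : EuclideanSpace ℝ (Fin m) × ℝ =>
      (f (app x.1 x.2) - c (app x.1 x.2) * ‖app x.1 x.2‖ ^ (-h (app x.1 x.2)))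
        * ‖app x.1 x.2‖ ^ (h (app x.1 x.2) + δ) * (|x.2| / ‖app x.1 x.2‖) ^ δ)
      (nearAxis _ s) (𝓝 0) := by
    refine squeeze_zero_norm' ?_
      (tendsto_zero_iff_norm_tendsto_zero.mp (hf.comp tendsto_app_nearAxis))
    filter_upwards [hpos] with x hq
    have ha := hq.trans_le (abs_le_norm_app x.1 x.2)
    rw [norm_mul]
    refine mul_le_of_le_one_right (norm_nonneg _) ?_
    rw [Real.norm_eq_abs, abs_of_nonneg (by positivity)]
    exact Real.rpow_le_one (by positivity) ((div_le_one ha).mpr (abs_le_norm_app _ _)) hδ0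
  have hr := tendsto_rpow_ratio_sub_one_mul_nearAxis hh hheven hLh hα hα1 hs1 hhlip hδ0 hδ
  have hr1 : Tendsto (fun x : EuclideanSpace ℝ (Fin m) × ℝ =>
      ‖app x.1 x.2‖ ^ (-h (app x.1 x.2)) * |x.2| ^ h (theta0 m)) (nearAxis _ s) (𝓝 1) := by
    rw [← tendsto_sub_nhds_zero_iff]
    simpa using tendsto_rpow_ratio_sub_one_mul_nearAxis hh hheven hLh hα hα1 hs1 hhlip le_rfl
      (hδ0.trans_lt hδ)
  have hcc := hc.tendsto_sub_apply_theta0_mul_rpow_nearAxis hceven hLc hα hclip hδ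
  have hsum := ((hA.mul hr1).add (hcc.mul hr1)).add (hr.const_mul (c (theta0 m)))
  simp only [zero_mul, add_zero, mul_zero] at hsum
  refine hsum.congr' ?_
  filter_upwards [hpos] with x hq
  exact (sub_mul_rpow_eq_of_pos (hq.trans_le (abs_le_norm_app x.1 x.2)) hq _ _ _ _ _ _).symm

end Asymptotics

lemma exists_abs_le_of_tendsto_cocompact {E : Type*} [NormedAddCommGroup E] [ProperSpace E]
    {f c h : E → ℝ} {Mc δ : ℝ} (hδ : 0 ≤ δ) (hc : ∀ ξ, ξ ≠ 0 → |c ξ| ≤ Mc)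
    (hh : ∀ ξ, ξ ≠ 0 → 0 ≤ h ξ)
    (hf : Tendsto (fun ξ => (f ξ - c ξ * ‖ξ‖ ^ (-h ξ)) * ‖ξ‖ ^ (h ξ + δ)) (cocompact E) (𝓝 0)) :
    ∃ R, ∀ ξ, R ≤ ‖ξ‖ → |f ξ| ≤ Mc + 1 := by
  have hev : ∀ᶠ ξ in cocompact E, |f ξ| ≤ Mc + 1 := by
    filter_upwards [(tendsto_zero_iff_norm_tendsto_zero.mp hf).eventually (ge_mem_nhds one_pos),
      tendsto_norm_cocompact_atTop.eventually_ge_atTop 1] with ξ hfξ hξ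
    have hξ0 : ξ ≠ 0 := norm_pos_iff.mp (one_pos.trans_le hξ)
    have herr : |f ξ - c ξ * ‖ξ‖ ^ (-h ξ)| ≤ 1 := by
      rw [Real.norm_eq_abs, abs_mul, abs_of_nonneg (Real.rpow_nonneg (norm_nonneg ξ) _)] at hfξ
      exact (le_mul_of_one_le_right (abs_nonneg _)
        (Real.one_le_rpow hξ (by linarith [hh ξ hξ0]))).trans hfξ
    have hmain : |c ξ * ‖ξ‖ ^ (-h ξ)| ≤ Mc := by
      rw [abs_mul, abs_of_nonneg (Real.rpow_nonneg (norm_nonneg ξ) _)]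
      exact (mul_le_of_le_one_right (abs_nonneg _) (Real.rpow_le_one_of_one_le_of_nonpos hξ
        (neg_nonpos.mpr (hh ξ hξ0)))).trans (hc ξ hξ0)
    linarith [abs_sub_abs_le_abs_sub (f ξ) (c ξ * ‖ξ‖ ^ (-h ξ))]
  rw [← Metric.cobounded_eq_cocompact, hasBasis_cobounded_norm.eventually_iff] at hev
  obtain ⟨R, -, hR⟩ := hev
  exact ⟨R, hR⟩

lemma integral_sub_mul_mul_eq {E : Type*} [MeasurableSpace E] {μ : Measure E} {a ρ : E → ℝ}
    (ha : Integrable (fun γ => a γ * ρ γ) μ) (hρ : Integrable ρ μ) (hρ1 : ∫ γ, ρ γ ∂μ = 1)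
    (K w : ℝ) : ∫ γ, (a γ - K) * w * ρ γ ∂μ = (∫ γ, a γ * ρ γ ∂μ - K) * w := by
  have : (fun γ => (a γ - K) * w * ρ γ) = fun γ => (a γ * ρ γ - K * ρ γ) * w := by
    ext; ring
  rw [this, integral_mul_const, integral_sub ha (hρ.const_mul K), integral_const_mul, hρ1,
    mul_one]

theorem statement12_general (m : ℕ) (α δ₀ : ℝ) (hα : 0 < α) (hα1 : α ≤ 1)
    (hδ₀ : 0 < δ₀)
    (h c : EuclideanSpace ℝ (Fin (m + 1)) → ℝ)
    (hheven : EvenFn h) (hceven : EvenFn c)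
    (hhhom : Homog0 h) (hchom : Homog0 c)
    (hhlip : LipSphere h α) (hclip : LipSphere c α)
    (hhpos : ∀ ξ : EuclideanSpace ℝ (Fin (m + 1)), ξ ≠ 0 → 0 < h ξ)
    (f : EuclideanSpace ℝ (Fin (m + 1)) → ℝ) (hfmeas : Measurable f)
    (hf : ∀ δ ∈ Set.Ioo (0 : ℝ) δ₀,
      Tendsto (fun ξ : EuclideanSpace ℝ (Fin (m + 1)) =>
          (f ξ - c ξ * ‖ξ‖ ^ (-h ξ)) * ‖ξ‖ ^ (h ξ + δ))
        (cocompact _) (nhds 0))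
    (ρ : SchwartzMap (EuclideanSpace ℝ (Fin m)) ℝ)
    (hρ : ∫ γ : EuclideanSpace ℝ (Fin m), ρ γ = 1) :
    (∃ P₀ : ℝ, ∀ p : ℝ, P₀ ≤ |p| →
      Integrable (fun γ : EuclideanSpace ℝ (Fin m) => f (app γ p) * ρ γ)) ∧
    ∀ δ ∈ Set.Ioo (0 : ℝ) (min δ₀ α),
      Tendsto (fun p : ℝ =>
          ((∫ γ : EuclideanSpace ℝ (Fin m), f (app γ p) * ρ γ) -
            c (theta0 m) * |p| ^ (-h (theta0 m))) * |p| ^ (h (theta0 m) + δ))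
        (cocompact ℝ) (nhds 0) := by
  obtain ⟨Lh, hLh, hhlip⟩ := hhlip
  obtain ⟨Lc, hLc, hclip⟩ := hclip
  obtain ⟨R, hR⟩ := exists_abs_le_of_tendsto_cocompact (half_pos hδ₀).le
    (fun ξ hξ => hchom.abs_le hclip hLc.le hα.le hξ (norm_theta0 m))
    (fun ξ hξ => (hhpos ξ hξ).le) (hf (δ₀ / 2) ⟨half_pos hδ₀, half_lt_self hδ₀⟩)
  have hfR : ∀ p, R ≤ |p| → ∀ γ, |f (app γ p)| ≤ |c (theta0 m)| + Lc * 2 ^ α + 1 :=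
    fun p hp γ => hR _ (hp.trans (abs_le_norm_app γ p))
  have hint : ∀ p, R ≤ |p| →
      Integrable (fun γ : EuclideanSpace ℝ (Fin m) => f (app γ p) * ρ γ) := fun p hp =>
    ρ.integrable.bdd_mul (hfmeas.comp (continuous_app p).measurable).aestronglyMeasurable
      (Eventually.of_forall (hfR p hp))
  refine ⟨⟨R, hint⟩, fun δ ⟨hδ0, hδ⟩ => ?_⟩
  rw [lt_min_iff] at hδ
  obtain ⟨s, hs, hs1, hsδ⟩ := exists_pos_le_one_lt_mul_one_sub hδ0.le hδ.2
  have hT := tendsto_error_mul_rpow_nearAxis hhhom hheven hchom hceven hLh.le hLc.le hα.le hα1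
    hs1 hhlip hclip hδ0.le hsδ (hf δ ⟨hδ0, hδ.1⟩)
  have hbound : ∀ᶠ p in cocompact ℝ, ∀ γ : EuclideanSpace ℝ (Fin m),
      |(f (app γ p) - c (theta0 m) * |p| ^ (-h (theta0 m))) * |p| ^ (h (theta0 m) + δ)| ≤
        (|c (theta0 m)| + Lc * 2 ^ α + 1 + |c (theta0 m)|) * |p| ^ (h (theta0 m) + δ) := by
    filter_upwards [tendsto_norm_cocompact_atTop.eventually_ge_atTop (max R 1)] with p hp γ
    exact abs_sub_mul_rpow_neg_mul_rpow_le (hfR p ((le_max_left _ _).trans hp) γ)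
      ((le_max_right _ _).trans hp) (hhpos _ (theta0_ne_zero m)).le
  refine (tendsto_integral_mul_schwartzMap_of_nearAxis volume hs hT
    (fun p => ?_) hbound ρ).congr' ?_
  · dsimp only
    exact (((hfmeas.comp (continuous_app p).measurable).sub_const _).mul_const _)
      |>.aestronglyMeasurable
  · filter_upwards [tendsto_norm_cocompact_atTop.eventually_ge_atTop R] with p hp
    exact integral_sub_mul_mul_eq (hint p hp) ρ.integrable hρ _ _

theorem statement12 (m : ℕ) (hm : 1 ≤ m) (α δ₀ : ℝ) (hα : 0 < α) (hα1 : α ≤ 1)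
    (hδ₀ : 0 < δ₀)
    (h c : EuclideanSpace ℝ (Fin (m + 1)) → ℝ)
    (hheven : EvenFn h) (hceven : EvenFn c)
    (hhhom : Homog0 h) (hchom : Homog0 c)
    (hhlip : LipSphere h α) (hclip : LipSphere c α)
    (hhpos : ∀ ξ : EuclideanSpace ℝ (Fin (m + 1)), ξ ≠ 0 → 0 < h ξ)
    (f : EuclideanSpace ℝ (Fin (m + 1)) → ℝ) (hfmeas : Measurable f)
    (hf : ∀ δ ∈ Set.Ioo (0 : ℝ) δ₀,
      Tendsto (fun ξ : EuclideanSpace ℝ (Fin (m + 1)) =>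
          (f ξ - c ξ * ‖ξ‖ ^ (-h ξ)) * ‖ξ‖ ^ (h ξ + δ))
        (cocompact _) (nhds 0))
    (ρ : SchwartzMap (EuclideanSpace ℝ (Fin m)) ℝ)
    (hρ : ∫ γ : EuclideanSpace ℝ (Fin m), ρ γ = 1) :
    (∃ P₀ : ℝ, ∀ p : ℝ, P₀ ≤ |p| →
      Integrable (fun γ : EuclideanSpace ℝ (Fin m) => f (app γ p) * ρ γ)) ∧
    ∀ δ ∈ Set.Ioo (0 : ℝ) (min δ₀ α),
      Tendsto (fun p : ℝ =>
          ((∫ γ : EuclideanSpace ℝ (Fin m), f (app γ p) * ρ γ) -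
            c (theta0 m) * |p| ^ (-h (theta0 m))) * |p| ^ (h (theta0 m) + δ))
        (cocompact ℝ) (nhds 0) :=
  statement12_general m α δ₀ hα hα1 hδ₀ h c hheven hceven hhhom hchom hhlip hclip hhpos f hfmeas hf
    ρ hρ
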